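/- A quadratic irrational α has a purely periodic continued fraction expansion if and only if α > 1 and its algebraic conjugate α' satisfies -1 < α' < 0 (Galois' theorem). -/

import Mathlib

/-!
Along the continued fraction algorithm `x_n = a_n + 1 / x_{n+1}`, the conjugates follow
`y_{n+1} = 1 / (y_n - a_n)`, and `(x_n, y_n)` stay the two roots of integer quadratics
`A t² + B t + C` of one fixed discriminant `D = A² (x_n - y_n)²`.

If `x > 1` and `-1 < x' < 0`, then every `y_n` lies in `(-1, 0)`, so `A² < D` and `B² < D`:
only finitely many quadratics occur and `x_j = x_k` for some `j < k`. As `a_n = ⌊-1 / y_{n+1}⌋`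
is determined by `x_{n+1}` (through its conjugate), this equality propagates back to
`x_0 = x_{k-j}`.

Conversely, if `x_p = x` the conjugates are `p`-periodic. Once one of them is negative, all later
ones lie in `(-1, 0)`, and so does `y_0 = x'`. If none were negative, `(y_n)` would be a second
solution of `y_n = a_n + 1 / y_{n+1}` with `y_{n+1} > 1`; such solutions are unique (the
two-step map contracts by a factor `4`), forcing `x' = x`.
-/

/-- The sequence of complete quotients of the continued fraction algorithm. -/
noncomputable def cfX (x : ℝ) : ℕ → ℝ
  | 0 => x
  | n + 1 =>
    if cfX x n - ⌊cfX x n⌋ = 0 then 0 else 1 / (cfX x n - ⌊cfX x n⌋)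

/-- The partial quotients (continued fraction expansion) of a real number. -/
noncomputable def cfA (x : ℝ) (n : ℕ) : ℤ := ⌊cfX x n⌋

open Set

theorem Irrational.eq_zero_of_intCast_mul_add_eq_zero {x : ℝ} (hx : Irrational x) {u v : ℤ}
    (h : (u : ℝ) * x + v = 0) : u = 0 ∧ v = 0 := by
  obtain rfl : u = 0 := by
    by_contra hu
    exact ((hx.intCast_mul hu).add_intCast v).ne_zero h
  exact ⟨rfl, by simpa using h⟩

/-- Vieta's formulas: `A t² + B t + C = A (t - x) (t - y)`. -/
def IsRootPair (A B C : ℤ) (x y : ℝ) : Prop :=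
  A ≠ 0 ∧ (B : ℝ) = -(A * (x + y)) ∧ (C : ℝ) = A * (x * y)

namespace IsRootPair

variable {A B C : ℤ} {x y : ℝ}

theorem of_roots (hA : A ≠ 0) (hx : (A : ℝ) * x ^ 2 + B * x + C = 0)
    (hy : (A : ℝ) * y ^ 2 + B * y + C = 0) (hxy : x ≠ y) : IsRootPair A B C x y := by
  have hB : (B : ℝ) = -(A * (x + y)) := by
    have : (x - y) * (A * (x + y) + B) = 0 := by linear_combination hx - hy
    linarith [(mul_eq_zero.1 this).resolve_left (sub_ne_zero.2 hxy)]
  exact ⟨hA, hB, by linear_combination hx - x * hB⟩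

theorem eval_left (h : IsRootPair A B C x y) : (A : ℝ) * x ^ 2 + B * x + C = 0 := by
  linear_combination x * h.2.1 + h.2.2

theorem disc_eq (h : IsRootPair A B C x y) :
    ((B ^ 2 - 4 * A * C : ℤ) : ℝ) = A ^ 2 * (x - y) ^ 2 := by
  push_cast
  rw [h.2.1, h.2.2]
  ring

theorem irrational_right (h : IsRootPair A B C x y) (hx : Irrational x) : Irrational y := by
  have : Irrational (-(A * y)) := by
    convert (hx.intCast_mul h.1).add_intCast B using 1
    rw [h.2.1]
    ring
  exact this.of_neg.of_intCast_mul A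

theorem right_unique_of_irrational {A' B' C' : ℤ} {y' : ℝ} (hx : Irrational x)
    (h : IsRootPair A B C x y) (h' : IsRootPair A' B' C' x y') : y = y' := by
  obtain ⟨hB, -⟩ := hx.eq_zero_of_intCast_mul_add_eq_zero (u := A' * B - A * B')
    (v := A' * C - A * C') (by
      push_cast
      linear_combination (A' : ℝ) * h.eval_left - A * h'.eval_left)
  have hB' : (A' : ℝ) * B = A * B' := by exact_mod_cast sub_eq_zero.1 hB
  rw [h.2.1, h'.2.1] at hB'
  have hAA' : (A : ℝ) * A' ≠ 0 := by exact_mod_cast mul_ne_zero h.1 h'.1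
  have : (A : ℝ) * A' * (y - y') = 0 := by linear_combination -hB'
  exact sub_eq_zero.1 ((mul_eq_zero.1 this).resolve_left hAA')

theorem inv_sub (h : IsRootPair A B C x y) {a : ℤ} (hx : x ≠ a) (hy : y ≠ a) :
    IsRootPair (A * a ^ 2 + B * a + C) (2 * A * a + B) A (x - a)⁻¹ (y - a)⁻¹ := by
  obtain ⟨hA, hB, hC⟩ := h
  have hx' : x - a ≠ 0 := sub_ne_zero.2 hx
  have hy' : y - a ≠ 0 := sub_ne_zero.2 hy
  have hA' : ((A * a ^ 2 + B * a + C : ℤ) : ℝ) = A * (x - a) * (y - a) := by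
    push_cast
    rw [hB, hC]
    ring
  refine ⟨?_, ?_, ?_⟩
  · have : ((A * a ^ 2 + B * a + C : ℤ) : ℝ) ≠ 0 := by
      rw [hA']
      exact mul_ne_zero (mul_ne_zero (by exact_mod_cast hA) hx') hy'
    exact_mod_cast this
  · rw [hA']
    push_cast
    rw [hB]
    field_simp
    ring
  · rw [hA']
    field_simp

theorem left_eq_of_lt {x' y' : ℝ} (h : IsRootPair A B C x y) (h' : IsRootPair A B C x' y')
    (hxy : y < x) (hxy' : y' < x') : x = x' := by
  have hA : (A : ℝ) ≠ 0 := by exact_mod_cast h.1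
  have hsum : x + y = x' + y' := mul_left_cancel₀ hA (by linarith [h.2.1, h'.2.1])
  have hprod : x * y = x' * y' := mul_left_cancel₀ hA (h.2.2.symm.trans h'.2.2)
  have hdiff : x - y = x' - y' := (sq_eq_sq₀ (by linarith) (by linarith)).1
    (by linear_combination (x + y + x' + y') * hsum - 4 * hprod)
  linarith

theorem sq_lt_disc (h : IsRootPair A B C x y) (hx : 1 < x) (hy : y ∈ Ioo (-1 : ℝ) 0) :
    A ^ 2 < B ^ 2 - 4 * A * C ∧ B ^ 2 < B ^ 2 - 4 * A * C := by
  have hA : (0 : ℝ) < (A : ℝ) ^ 2 := by exact_mod_cast sq_pos_of_ne_zero h.1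
  obtain ⟨hy₁, hy₂⟩ := hy
  constructor
  · have : ((A ^ 2 : ℤ) : ℝ) < ((B ^ 2 - 4 * A * C : ℤ) : ℝ) := by
      rw [h.disc_eq, Int.cast_pow]
      exact lt_mul_of_one_lt_right hA (by nlinarith)
    exact_mod_cast this
  · have : ((B ^ 2 : ℤ) : ℝ) < ((B ^ 2 - 4 * A * C : ℤ) : ℝ) := by
      rw [h.disc_eq, Int.cast_pow, h.2.1, neg_sq, mul_pow]
      exact mul_lt_mul_of_pos_left (by nlinarith) hA
    exact_mod_cast this

end IsRootPair

section RealSequence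

variable {a : ℕ → ℤ} {u v : ℕ → ℝ}

theorem abs_sub_mul_eq_of_eq_add_inv (hu : ∀ n, u n = a n + (u (n + 1))⁻¹)
    (hv : ∀ n, v n = a n + (v (n + 1))⁻¹) (hu₁ : ∀ n, 1 < u (n + 1)) (hv₁ : ∀ n, 1 < v (n + 1))
    (n : ℕ) : |u n - v n| * (u (n + 1) * v (n + 1)) = |u (n + 1) - v (n + 1)| := by
  have hu₀ : u (n + 1) ≠ 0 := by linarith [hu₁ n]
  have hv₀ : v (n + 1) ≠ 0 := by linarith [hv₁ n]
  have hpos : 0 < u (n + 1) * v (n + 1) := mul_pos (by linarith [hu₁ n]) (by linarith [hv₁ n])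
  rw [← abs_of_pos hpos, ← abs_mul, hu n, hv n, abs_sub_comm]
  congr 1
  field_simp
  ring

theorem two_lt_mul_of_eq_add_inv (hu : ∀ n, u n = a n + (u (n + 1))⁻¹) (hu₁ : ∀ n, 1 < u (n + 1))
    (n : ℕ) : 2 < u (n + 1) * u (n + 2) := by
  have hinv := inv_lt_one_of_one_lt₀ (hu₁ (n + 1))
  have ha₀ : (0 : ℝ) < a (n + 1) := by linarith [hu (n + 1), hu₁ n]
  have ha : (1 : ℝ) ≤ a (n + 1) := by
    have : 0 < a (n + 1) := by exact_mod_cast ha₀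
    exact_mod_cast (by omega : 1 ≤ a (n + 1))
  have hu₂ : u (n + 1) * u (n + 2) = a (n + 1) * u (n + 2) + 1 := by
    rw [hu (n + 1), add_mul, inv_mul_cancel₀ (by linarith [hu₁ (n + 1)])]
  nlinarith [hu₁ (n + 1)]

theorem abs_sub_lt_one_of_eq_add_inv (hu : ∀ n, u n = a n + (u (n + 1))⁻¹)
    (hv : ∀ n, v n = a n + (v (n + 1))⁻¹) (hu₁ : ∀ n, 1 < u (n + 1)) (hv₁ : ∀ n, 1 < v (n + 1))
    (n : ℕ) : |u n - v n| < 1 := by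
  have := inv_pos.2 (zero_lt_one.trans (hu₁ n))
  have := inv_pos.2 (zero_lt_one.trans (hv₁ n))
  have := inv_lt_one_of_one_lt₀ (hu₁ n)
  have := inv_lt_one_of_one_lt₀ (hv₁ n)
  rw [abs_sub_lt_iff, hu n, hv n]
  constructor <;> linarith

theorem eq_of_forall_eq_intCast_add_inv (hu : ∀ n, u n = a n + (u (n + 1))⁻¹)
    (hv : ∀ n, v n = a n + (v (n + 1))⁻¹) (hu₁ : ∀ n, 1 < u (n + 1)) (hv₁ : ∀ n, 1 < v (n + 1)) :
    u 0 = v 0 := by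
  have hstep := abs_sub_mul_eq_of_eq_add_inv hu hv hu₁ hv₁
  have hcontract (n : ℕ) : 4 * |u n - v n| ≤ |u (n + 2) - v (n + 2)| := calc
    4 * |u n - v n| ≤ |u n - v n| * ((u (n + 1) * u (n + 2)) * (v (n + 1) * v (n + 2))) := by
      rw [mul_comm 4]
      refine mul_le_mul_of_nonneg_left ?_ (abs_nonneg _)
      nlinarith [two_lt_mul_of_eq_add_inv hu hu₁ n, two_lt_mul_of_eq_add_inv hv hv₁ n]
    _ = |u (n + 2) - v (n + 2)| := by rw [← hstep (n + 1), ← hstep n]; ring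
  have hpow (k : ℕ) : 4 ^ k * |u 0 - v 0| < 1 := by
    refine lt_of_le_of_lt ?_ (abs_sub_lt_one_of_eq_add_inv hu hv hu₁ hv₁ (2 * k))
    induction k with
    | zero => simp
    | succ k ih => calc
        4 ^ (k + 1) * |u 0 - v 0| ≤ 4 * |u (2 * k) - v (2 * k)| := by rw [pow_succ']; linarith
        _ ≤ |u (2 * (k + 1)) - v (2 * (k + 1))| := hcontract (2 * k)
  by_contra hne
  have hpos : 0 < |u 0 - v 0| := abs_pos.2 (sub_ne_zero.2 hne)
  obtain ⟨k, hk⟩ := pow_unbounded_of_one_lt (|u 0 - v 0|)⁻¹ (by norm_num : (1 : ℝ) < 4)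
  have := hpow k
  rw [inv_lt_iff_one_lt_mul₀ hpos] at hk
  linarith

end RealSequence

theorem cfX_succ (x : ℝ) (n : ℕ) : cfX x (n + 1) = (Int.fract (cfX x n))⁻¹ := by
  simp only [cfX]
  split_ifs with h
  · rw [← Int.self_sub_floor, h, inv_zero]
  · rw [one_div, Int.self_sub_floor]

theorem cfX_add (x : ℝ) (m n : ℕ) : cfX x (m + n) = cfX (cfX x m) n := by
  induction n with
  | zero => rfl
  | succ n ih => rw [← add_assoc, cfX_succ, cfX_succ, ih]

theorem cfA_add (x : ℝ) (m n : ℕ) : cfA x (m + n) = cfA (cfX x m) n := by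
  rw [cfA, cfA, cfX_add]

theorem cfX_eq_cfA_add_inv (x : ℝ) (n : ℕ) : cfX x n = cfA x n + (cfX x (n + 1))⁻¹ := by
  rw [cfX_succ, inv_inv, cfA, Int.floor_add_fract]

section Irrational

variable {x : ℝ}

theorem irrational_cfX (hx : Irrational x) (n : ℕ) : Irrational (cfX x n) := by
  induction n with
  | zero => exact hx
  | succ n ih => rw [cfX_succ, ← Int.self_sub_floor]; exact (ih.sub_intCast _).inv

theorem one_lt_cfX_succ (hx : Irrational x) (n : ℕ) : 1 < cfX x (n + 1) := by
  rw [cfX_succ]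
  exact (one_lt_inv₀ (Int.fract_pos.2 ((irrational_cfX hx n).ne_int _))).2 (Int.fract_lt_one _)

theorem one_lt_cfX (hx : Irrational x) (hx₁ : 1 < x) : ∀ n, 1 < cfX x n
  | 0 => hx₁
  | n + 1 => one_lt_cfX_succ hx n

theorem one_le_cfA (hx : Irrational x) (hx₁ : 1 < x) (n : ℕ) : 1 ≤ cfA x n :=
  Int.le_floor.2 (by exact_mod_cast (one_lt_cfX hx hx₁ n).le)

theorem cfA_add_eq_iff_cfX_eq (hx : Irrational x) (p : ℕ) :
    (∀ n, cfA x (n + p) = cfA x n) ↔ cfX x p = x := by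
  constructor
  · intro h
    have hxp := irrational_cfX hx p
    refine eq_of_forall_eq_intCast_add_inv (a := cfA x) (fun n => ?_) (cfX_eq_cfA_add_inv x)
      (one_lt_cfX_succ hxp) (one_lt_cfX_succ hx)
    rw [cfX_eq_cfA_add_inv, ← cfA_add, add_comm p, h]
  · intro h n
    rw [add_comm, cfA_add, h]

end Irrational

/-- When `x'` is the conjugate of `x`, `cfConj x x' n` is the conjugate of `cfX x n`. -/
noncomputable def cfConj (x x' : ℝ) : ℕ → ℝ
  | 0 => x'
  | n + 1 => (cfConj x x' n - cfA x n)⁻¹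

section Conjugate

variable {A B C : ℤ} {x x' : ℝ}

theorem cfConj_eq_cfA_add_inv (x x' : ℝ) (n : ℕ) :
    cfConj x x' n = cfA x n + (cfConj x x' (n + 1))⁻¹ := by
  rw [cfConj, inv_inv]
  ring

theorem exists_isRootPair_cfX_cfConj (hx : Irrational x) (h : IsRootPair A B C x x') (n : ℕ) :
    ∃ A' B' C' : ℤ, B' ^ 2 - 4 * A' * C' = B ^ 2 - 4 * A * C ∧
      IsRootPair A' B' C' (cfX x n) (cfConj x x' n) := by
  induction n with
  | zero => exact ⟨A, B, C, rfl, h⟩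
  | succ n ih =>
    obtain ⟨A', B', C', hD, hn⟩ := ih
    have hxn := irrational_cfX hx n
    refine ⟨A' * cfA x n ^ 2 + B' * cfA x n + C', 2 * A' * cfA x n + B', A',
      by linear_combination hD, ?_⟩
    rw [cfX_succ, ← Int.self_sub_floor]
    exact hn.inv_sub (hxn.ne_int _) ((hn.irrational_right hxn).ne_int _)

theorem irrational_cfConj (hx : Irrational x) (h : IsRootPair A B C x x') (n : ℕ) :
    Irrational (cfConj x x' n) := by
  obtain ⟨_, _, _, -, hn⟩ := exists_isRootPair_cfX_cfConj hx h n
  exact hn.irrational_right (irrational_cfX hx n)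

theorem cfConj_eq_of_cfX_eq (hx : Irrational x) (h : IsRootPair A B C x x') {m n : ℕ}
    (hmn : cfX x m = cfX x n) : cfConj x x' m = cfConj x x' n := by
  obtain ⟨_, _, _, -, hm⟩ := exists_isRootPair_cfX_cfConj hx h m
  obtain ⟨_, _, _, -, hn⟩ := exists_isRootPair_cfX_cfConj hx h n
  rw [hmn] at hm
  exact hm.right_unique_of_irrational (irrational_cfX hx n) hn

theorem cfConj_succ_mem_Ioo {n : ℕ} (ha : 1 ≤ cfA x n) (hy : cfConj x x' n < 0) :
    cfConj x x' (n + 1) ∈ Ioo (-1) 0 := by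
  have ha : (1 : ℝ) ≤ cfA x n := by exact_mod_cast ha
  have hlt : 1 < -(cfConj x x' n - cfA x n) := by linarith
  have := inv_lt_one_of_one_lt₀ hlt
  rw [inv_neg] at this
  rw [cfConj]
  exact ⟨by linarith, inv_lt_zero.2 (by linarith)⟩

theorem cfConj_mem_Ioo_of_lt (ha : ∀ k, 1 ≤ cfA x k) {n : ℕ} (hy : cfConj x x' n < 0) :
    ∀ m, n < m → cfConj x x' m ∈ Ioo (-1) 0 := by
  intro m hm
  induction m, hm using Nat.le_induction with
  | base => exact cfConj_succ_mem_Ioo (ha n) hy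
  | succ m _ ih => exact cfConj_succ_mem_Ioo (ha m) ih.2

theorem cfA_eq_floor_neg_inv_cfConj_succ {n : ℕ} (hy : cfConj x x' n ∈ Ioo (-1) 0) :
    cfA x n = ⌊-(cfConj x x' (n + 1))⁻¹⌋ := by
  rw [cfConj, inv_inv, neg_sub, sub_eq_add_neg, Int.floor_intCast_add,
    Int.floor_eq_zero_iff.2 ⟨by linarith [hy.2], by linarith [hy.1]⟩, add_zero]

end Conjugate

section Galois

variable {A B C : ℤ} {x x' : ℝ}

theorem exists_cfConj_neg (hx : Irrational x) (h : IsRootPair A B C x x') (hne : x' ≠ x)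
    (ha : ∀ n, 1 ≤ cfA x n) : ∃ n, cfConj x x' n < 0 := by
  by_contra! hnonneg
  have hpos (n : ℕ) : 0 < cfConj x x' n :=
    (hnonneg n).lt_of_ne' (irrational_cfConj hx h n).ne_zero
  refine hne (eq_of_forall_eq_intCast_add_inv (cfConj_eq_cfA_add_inv x x') (cfX_eq_cfA_add_inv x)
    (fun n => ?_) (one_lt_cfX_succ hx))
  have : (1 : ℝ) ≤ cfA x (n + 1) := by exact_mod_cast ha (n + 1)
  rw [cfConj_eq_cfA_add_inv x x' (n + 1)]
  linarith [inv_pos.2 (hpos (n + 2))]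

theorem reduced_of_cfX_eq_self (hx : Irrational x) (h : IsRootPair A B C x x') (hne : x' ≠ x)
    {p : ℕ} (hp : 1 ≤ p) (hfix : cfX x p = x) : 1 < x ∧ x' ∈ Ioo (-1) 0 := by
  have hx₁ : 1 < x := by
    obtain ⟨m, rfl⟩ := Nat.exists_eq_add_of_le' hp
    exact hfix ▸ one_lt_cfX_succ hx m
  have hper (k : ℕ) : cfConj x x' (k * p) = x' := by
    induction k with
    | zero => rw [zero_mul]; rfl
    | succ k ih =>
      refine (cfConj_eq_of_cfX_eq hx h ?_).trans ih
      rw [add_mul, one_mul, add_comm, cfX_add, hfix]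
  obtain ⟨n, hn⟩ := exists_cfConj_neg hx h hne (one_le_cfA hx hx₁)
  have hlt : n < (n + 1) * p := by nlinarith
  exact ⟨hx₁, hper (n + 1) ▸ cfConj_mem_Ioo_of_lt (one_le_cfA hx hx₁) hn _ hlt⟩

theorem exists_lt_cfX_eq (hx : Irrational x) (h : IsRootPair A B C x x') (hx₁ : 1 < x)
    (hy : ∀ n, cfConj x x' n ∈ Ioo (-1) 0) : ∃ j k, j < k ∧ cfX x j = cfX x k := by
  choose A' B' C' hD hpair using exists_isRootPair_cfX_cfConj hx h
  set D := B ^ 2 - 4 * A * C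
  have hbound {b : ℤ} (hb : b ^ 2 < D) : b ∈ Icc (-D) D :=
    abs_le.1 (by rw [← Int.natCast_natAbs]; linarith [Int.natAbs_le_self_sq b])
  have hmem (n : ℕ) : (A' n, B' n) ∈ Icc (-D) D ×ˢ Icc (-D) D := by
    obtain ⟨hA, hB⟩ := (hpair n).sq_lt_disc (one_lt_cfX hx hx₁ n) (hy n)
    rw [hD] at hA hB
    exact ⟨hbound hA, hbound hB⟩
  obtain ⟨j, k, hjk, hAB⟩ :=
    ((finite_Icc _ _).prod (finite_Icc _ _)).exists_lt_map_eq_of_forall_mem hmem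
  obtain ⟨hA, hB⟩ := Prod.mk.inj hAB
  have hC : C' j = C' k := by
    have hDj := hD j
    rw [hA, hB, ← hD k] at hDj
    exact mul_left_cancel₀ (hpair k).1 (by linarith)
  refine ⟨j, k, hjk, (hpair j).left_eq_of_lt (hA ▸ hB ▸ hC ▸ hpair k) ?_ ?_⟩
  · linarith [(hy j).2, one_lt_cfX hx hx₁ j]
  · linarith [(hy k).2, one_lt_cfX hx hx₁ k]

theorem cfX_eq_of_cfX_succ_eq (hx : Irrational x) (h : IsRootPair A B C x x')
    (hy : ∀ n, cfConj x x' n ∈ Ioo (-1) 0) {m n : ℕ} (hmn : cfX x (m + 1) = cfX x (n + 1)) :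
    cfX x m = cfX x n := by
  have hconj := cfConj_eq_of_cfX_eq hx h hmn
  have ha : cfA x m = cfA x n := by
    rw [cfA_eq_floor_neg_inv_cfConj_succ (hy m), cfA_eq_floor_neg_inv_cfConj_succ (hy n), hconj]
  rw [cfX_eq_cfA_add_inv x m, cfX_eq_cfA_add_inv x n, ha, hmn]

theorem exists_cfX_eq_self_of_reduced (hx : Irrational x) (h : IsRootPair A B C x x')
    (hx₁ : 1 < x) (hx' : x' ∈ Ioo (-1) 0) : ∃ p, 1 ≤ p ∧ cfX x p = x := by
  have hy (n : ℕ) : cfConj x x' n ∈ Ioo (-1) 0 := by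
    rcases n.eq_zero_or_pos with rfl | hn
    · exact hx'
    · exact cfConj_mem_Ioo_of_lt (x' := x') (n := 0) (one_le_cfA hx hx₁) hx'.2 n hn
  obtain ⟨j, k, hjk, hjk_eq⟩ := exists_lt_cfX_eq hx h hx₁ hy
  obtain ⟨d, rfl⟩ := Nat.exists_eq_add_of_lt hjk
  have hdescend (i : ℕ) : cfX x i = cfX x (i + (d + 1)) → cfX x 0 = cfX x (d + 1) := by
    induction i with
    | zero => rw [zero_add]; exact id
    | succ i ih =>
      intro hi
      exact ih (cfX_eq_of_cfX_succ_eq hx h hy (by rwa [add_right_comm] at hi))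
  exact ⟨d + 1, le_add_self, (hdescend j (by rwa [← add_assoc])).symm⟩

end Galois

/-- Galois: a quadratic irrational has purely periodic continued fraction iff
`α > 1` and its conjugate lies in `(-1, 0)`. -/
theorem purely_periodic_iff_reduced (α α' : ℝ) (hα : Irrational α)
    (A B C : ℤ) (hA : A ≠ 0)
    (hroot : (A : ℝ) * α ^ 2 + (B : ℝ) * α + (C : ℝ) = 0)
    (hroot' : (A : ℝ) * α' ^ 2 + (B : ℝ) * α' + (C : ℝ) = 0)
    (hne : α' ≠ α) :
    (∃ p : ℕ, 1 ≤ p ∧ ∀ n : ℕ, cfA α (n + p) = cfA α n) ↔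
      1 < α ∧ -1 < α' ∧ α' < 0 := by
  have h := IsRootPair.of_roots hA hroot hroot' hne.symm
  simp only [cfA_add_eq_iff_cfX_eq hα]
  constructor
  · rintro ⟨p, hp, hfix⟩
    exact reduced_of_cfX_eq_self hα h hne hp hfix
  · rintro ⟨hα₁, hα'⟩
    exact exists_cfX_eq_self_of_reduced hα h hα₁ hα'
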